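/- (Appendix Claim 4.) Let t ≥ 1 be an integer with t ≤ n. For any two arrays X₁, X_{t+1} ∈ Σ_q^{n^{⊗d}}, it holds that D_{t𝟏}(X₁) ∩ D_{t𝟏}(X_{t+1}) ≠ ∅ if and only if there exist t − 1 arrays X₂, …, X_t ∈ Σ_q^{n^{⊗d}} such that D_{𝟏}(X_i) ∩ D_{𝟏}(X_{i+1}) ≠ ∅ for all 1 ≤ i ≤ t, where 𝟏 = (1, …, 1) is the all-one vector of length d. -/

import Mathlib

/-- A `q`-ary `d`-dimensional array: a size vector `size : Fin d → ℕ` together with an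
entry of the alphabet `Fin q` for every index tuple inside the box
`[size 0] × ⋯ × [size (d-1)]`. -/
structure Arr (q d : ℕ) where
  size : Fin d → ℕ
  val : ∀ x : Fin d → ℕ, (∀ i, x i < size i) → Fin q

/-- The index map associated with inserting a hyperplane at position `k` along axis `i`:
coordinates below `k` stay put, the others are shifted up by one (so that position `k`
along axis `i` is the freshly inserted hyperplane). -/
def insIdx {d : ℕ} (i : Fin d) (k : ℕ) (x : Fin d → ℕ) : Fin d → ℕ :=
  fun j => if j = i then (if x i < k then x i else x i + 1) else x j

/-- `InsertsTo i A B`: the array `B` is obtained from the array `A` by a single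
`x_i`-insertion, i.e. by inserting one `(d-1)`-dimensional hyperplane (with arbitrary
entries) orthogonal to the `x_i`-axis. -/
def InsertsTo {q d : ℕ} (i : Fin d) (A B : Arr q d) : Prop :=
  (∀ j, B.size j = if j = i then A.size j + 1 else A.size j) ∧
  ∃ k ≤ A.size i, ∀ (x : Fin d → ℕ) (hx : ∀ j, x j < A.size j)
    (hx' : ∀ j, insIdx i k x j < B.size j),
    A.val x hx = B.val (insIdx i k x) hx'

/-- `DeletesTo i A B`: the array `B` is obtained from `A` by a single `x_i`-deletion,
the inverse operation of an `x_i`-insertion. -/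
def DeletesTo {q d : ℕ} (i : Fin d) (A B : Arr q d) : Prop :=
  InsertsTo i B A

/-- `Steps R t A B`: the array `B` is obtained from the array `A` by performing, for each
axis `i`, exactly `t i` operations of type `R i` (in some order). -/
inductive Steps {q d : ℕ} (R : Fin d → Arr q d → Arr q d → Prop) :
    (Fin d → ℕ) → Arr q d → Arr q d → Prop
  | refl (A : Arr q d) : Steps R 0 A A
  | step {t : Fin d → ℕ} {A B C : Arr q d} (i : Fin d) :
      R i A B → Steps R t B C → Steps R (t + Pi.single i 1) A C

/-- The deletion ball `D_t(X)`: all arrays obtainable from `X` by a `t`-deletion,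
i.e. by `t i` `x_i`-deletions for each axis `i`. -/
def delBall {q d : ℕ} (t : Fin d → ℕ) (X : Arr q d) : Set (Arr q d) :=
  {Y | Steps DeletesTo t X Y}

/-- The insertion ball `I_t(X)`: all arrays obtainable from `X` by a `t`-insertion,
i.e. by `t i` `x_i`-insertions for each axis `i`. -/
def insBall {q d : ℕ} (t : Fin d → ℕ) (X : Arr q d) : Set (Arr q d) :=
  {Y | Steps InsertsTo t X Y}

/-- The insertion-deletion ball `ID_t(X)`: all arrays obtainable from `X` by a
`t^del`-deletion followed by a `t^ins`-insertion, for some decomposition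
`t = t^ins + t^del`. -/
def insDelBall {q d : ℕ} (t : Fin d → ℕ) (X : Arr q d) : Set (Arr q d) :=
  {Z | ∃ tins tdel : Fin d → ℕ, tins + tdel = t ∧
    ∃ W ∈ delBall tdel X, Z ∈ insBall tins W}

/-- `Σ_q^{n^{⊗d}}`: the set of `q`-ary `d`-dimensional arrays of cubic size `n × ⋯ × n`. -/
def cube (q d n : ℕ) : Set (Arr q d) := {A | A.size = fun _ => n}

/-- A code `C` is a `t`-deletion-correcting code if the deletion balls `D_t(X)`, `X ∈ C`,
are pairwise disjoint. -/
def IsDelCode {q d : ℕ} (t : Fin d → ℕ) (C : Set (Arr q d)) : Prop :=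
  ∀ X ∈ C, ∀ Y ∈ C, X ≠ Y → delBall t X ∩ delBall t Y = ∅

/-- A code `C` is a `t`-insertion-correcting code if the insertion balls `I_t(X)`,
`X ∈ C`, are pairwise disjoint. -/
def IsInsCode {q d : ℕ} (t : Fin d → ℕ) (C : Set (Arr q d)) : Prop :=
  ∀ X ∈ C, ∀ Y ∈ C, X ≠ Y → insBall t X ∩ insBall t Y = ∅

/-- A code `C` is a `t`-insdel-correcting code if the insertion-deletion balls `ID_t(X)`,
`X ∈ C`, are pairwise disjoint. -/
def IsInsDelCode {q d : ℕ} (t : Fin d → ℕ) (C : Set (Arr q d)) : Prop :=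
  ∀ X ∈ C, ∀ Y ∈ C, X ≠ Y → insDelBall t X ∩ insDelBall t Y = ∅

/-!
Hyperplane deletions along different axes commute up to re-indexing, so a `(s + s')`-deletion
factors as an `s`-deletion followed by an `s'`-deletion. Two single insertions into the same array
can always be amalgamated into a common superarray (the entry where the two new hyperplanes cross
is arbitrary), and two single deletions from the same array have a common further deletion unless
both act along an axis of length one; tiling these squares gives the same statements
for multi-step insertions and deletions.

If `Y` is a common `t𝟏`-deletion of `X₁` and `X_{t+1}`, write `X₁ → W → Y` and `X_{t+1} → M → Y`
with `W ∈ D_{(t-1)𝟏}(X₁)` and `M ∈ D_𝟏(X_{t+1})`; amalgamating `W` and `M` above `Y` gives a cubic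
array `X_t` with `W ∈ D_{(t-1)𝟏}(X_t)` and `M ∈ D_𝟏(X_t)`, and induction on `t` builds the chain.
Conversely, a common `j𝟏`-deletion of `X₁, X_{j+1}` and a common `𝟏`-deletion of
`X_{j+1}, X_{j+2}` have a common further deletion inside `X_{j+1}`, because `j + 1 ≤ n`.
-/

section Indices

variable {d : ℕ}

def delIdx (i : Fin d) (k : ℕ) (x : Fin d → ℕ) : Fin d → ℕ :=
  fun j => if j = i then (if x i < k then x i else x i - 1) else x j

theorem insIdx_comm {i j : Fin d} (hij : i ≠ j) (k k' : ℕ) (x : Fin d → ℕ) :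
    insIdx i k (insIdx j k' x) = insIdx j k' (insIdx i k x) := by
  funext l
  by_cases hl : l = i <;> by_cases hl' : l = j <;> simp_all [insIdx, Ne.symm hij]

theorem insIdx_insIdx_of_le (i : Fin d) {k m : ℕ} (h : k ≤ m) (x : Fin d → ℕ) :
    insIdx i k (insIdx i m x) = insIdx i (m + 1) (insIdx i k x) := by
  funext l
  by_cases hl : l = i
  · subst hl; simp only [insIdx, if_true]; split_ifs <;> omega
  · simp [insIdx, hl]

theorem insIdx_self_ne (i : Fin d) (k : ℕ) (x : Fin d → ℕ) : insIdx i k x i ≠ k := by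
  simp only [insIdx, if_true]; split_ifs <;> omega

theorem delIdx_insIdx (i : Fin d) (k : ℕ) (x : Fin d → ℕ) : delIdx i k (insIdx i k x) = x := by
  funext l
  by_cases hl : l = i
  · subst hl; simp only [delIdx, insIdx, if_true]; split_ifs <;> omega
  · simp [delIdx, insIdx, hl]

theorem insIdx_delIdx {i : Fin d} {k : ℕ} {x : Fin d → ℕ} (hx : x i ≠ k) :
    insIdx i k (delIdx i k x) = x := by
  funext l
  by_cases hl : l = i
  · subst hl; simp only [delIdx, insIdx, if_true]; split_ifs <;> omega
  · simp [delIdx, insIdx, hl]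

theorem delIdx_insIdx_comm {i j : Fin d} (hij : i ≠ j) (k k' : ℕ) (x : Fin d → ℕ) :
    delIdx j k' (insIdx i k x) = insIdx i k (delIdx j k' x) := by
  funext l
  by_cases hl : l = i <;> by_cases hl' : l = j <;> simp_all [insIdx, delIdx, Ne.symm hij]

theorem delIdx_succ_insIdx {i : Fin d} {k k' : ℕ} (hk : k ≤ k') {x : Fin d → ℕ} (hx : x i ≠ k') :
    delIdx i (k' + 1) (insIdx i k x) = insIdx i k (delIdx i k' x) := by
  funext l
  by_cases hl : l = i
  · subst hl; simp only [delIdx, insIdx, if_true]; split_ifs <;> omega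
  · simp [delIdx, insIdx, hl]

theorem insIdx_lt_add_single_iff {i : Fin d} {k : ℕ} {s x : Fin d → ℕ} (hk : k ≤ s i) :
    (∀ j, insIdx i k x j < (s + Pi.single i 1 : Fin d → ℕ) j) ↔ ∀ j, x j < s j := by
  refine forall_congr' fun j => ?_
  by_cases hj : j = i
  · subst hj; simp only [insIdx, if_true, Pi.add_apply, Pi.single_eq_same]; split_ifs <;> omega
  · simp [insIdx, hj]

theorem sub_single_add_single {s : Fin d → ℕ} {i : Fin d} (h : 1 ≤ s i) :
    s - Pi.single i 1 + Pi.single i 1 = s := by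
  funext j
  by_cases hj : j = i
  · subst hj; simp only [Pi.add_apply, Pi.sub_apply, Pi.single_eq_same]; omega
  · simp [hj]

theorem eq_sub_single_add {s a b : Fin d → ℕ} {i : Fin d} (h : s + Pi.single i 1 = a + b)
    (ha : 1 ≤ a i) : s = a - Pi.single i 1 + b := by
  rw [← sub_single_add_single ha, add_right_comm] at h
  exact add_right_cancel h

end Indices

namespace Arr

variable {q d : ℕ} [NeZero q]

/-- Total version of `Arr.val`, with the junk value `0` outside the box. It turns the index
bookkeeping of `InsertsTo` into identities between functions (`InsertsTo.exists_get_eq`). -/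
def get (A : Arr q d) (x : Fin d → ℕ) : Fin q :=
  if h : ∀ i, x i < A.size i then A.val x h else 0

theorem get_of_mem (A : Arr q d) {x : Fin d → ℕ} (h : ∀ i, x i < A.size i) :
    A.get x = A.val x h := dif_pos h

theorem get_of_not_mem (A : Arr q d) {x : Fin d → ℕ} (h : ¬ ∀ i, x i < A.size i) :
    A.get x = 0 := dif_neg h

theorem ext_of_get {A B : Arr q d} (hs : A.size = B.size) (hg : A.get = B.get) : A = B := by
  obtain ⟨s, v⟩ := A
  obtain ⟨s', v'⟩ := B
  obtain rfl : s = s' := hs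
  congr
  funext x hx
  simpa [get_of_mem ⟨s, v⟩ hx, get_of_mem ⟨s, v'⟩ hx] using congrFun hg x

def delete (X : Arr q d) (i : Fin d) (k : ℕ) : Arr q d :=
  ⟨X.size - Pi.single i 1, fun x _ => X.get (insIdx i k x)⟩

theorem get_delete {X : Arr q d} {i : Fin d} {k : ℕ} (hk : k < X.size i) :
    (X.delete i k).get = X.get ∘ insIdx i k := by
  funext x
  by_cases hx : ∀ j, x j < (X.delete i k).size j
  · rw [get_of_mem _ hx]; rfl
  · have hbox := insIdx_lt_add_single_iff (x := x) (s := X.size - Pi.single i 1) (i := i)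
      (k := k) (by simp only [Pi.sub_apply, Pi.single_eq_same]; omega)
    rw [sub_single_add_single (s := X.size) (by omega)] at hbox
    rw [get_of_not_mem _ hx, Function.comp_apply, get_of_not_mem _ (mt hbox.1 hx)]

end Arr

section SingleSteps

variable {q d : ℕ}

theorem InsertsTo.size_eq {i : Fin d} {C A : Arr q d} (h : InsertsTo i C A) :
    A.size = C.size + Pi.single i 1 := by
  funext j
  have := h.1 j
  by_cases hj : j = i
  · subst hj; simpa using this
  · simpa [hj] using this

theorem InsertsTo.size_self {i : Fin d} {C A : Arr q d} (h : InsertsTo i C A) :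
    A.size i = C.size i + 1 := by
  simpa using h.1 i

theorem InsertsTo.size_of_ne {i j : Fin d} {C A : Arr q d} (h : InsertsTo i C A) (hj : j ≠ i) :
    A.size j = C.size j := by
  simpa [hj] using h.1 j

variable [NeZero q]

theorem insertsTo_of_get {i : Fin d} {k : ℕ} {C A : Arr q d}
    (hs : A.size = C.size + Pi.single i 1) (hk : k ≤ C.size i)
    (h : ∀ x, (∀ j, x j < C.size j) → C.get x = A.get (insIdx i k x)) : InsertsTo i C A := by
  refine ⟨fun j => by by_cases hj : j = i <;> simp [hs, hj], k, hk, fun x hx hx' => ?_⟩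
  rw [← C.get_of_mem hx, ← A.get_of_mem hx']
  exact h x hx

theorem InsertsTo.exists_get_eq {i : Fin d} {C A : Arr q d} (h : InsertsTo i C A) :
    ∃ k ≤ C.size i, C.get = A.get ∘ insIdx i k := by
  have hs := h.size_eq
  obtain ⟨-, k, hk, hv⟩ := h
  refine ⟨k, hk, funext fun x => ?_⟩
  have hbox := insIdx_lt_add_single_iff (x := x) hk
  rw [← hs] at hbox
  by_cases hx : ∀ j, x j < C.size j
  · rw [Function.comp_apply, C.get_of_mem hx, A.get_of_mem (hbox.2 hx), hv]
  · rw [Function.comp_apply, C.get_of_not_mem hx, A.get_of_not_mem (mt hbox.1 hx)]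

theorem Arr.insertsTo_delete {X : Arr q d} {i : Fin d} {k : ℕ} (hk : k < X.size i) :
    InsertsTo i (X.delete i k) X :=
  insertsTo_of_get (sub_single_add_single (s := X.size) (by omega)).symm
    (by simp only [Arr.delete, Pi.sub_apply, Pi.single_eq_same]; omega)
    (fun x _ => congrFun (Arr.get_delete hk) x)

theorem DeletesTo.exists_swap {i j : Fin d} {X A B : Arr q d} (hA : DeletesTo i X A)
    (hB : DeletesTo j A B) : ∃ A', DeletesTo j X A' ∧ DeletesTo i A' B := by
  by_cases hij : i = j
  · subst hij; exact ⟨A, hA, hB⟩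
  obtain ⟨k, hk, hAX⟩ := hA.exists_get_eq
  obtain ⟨k', hk', hBA⟩ := hB.exists_get_eq
  have hXj := hA.size_of_ne (Ne.symm hij)
  have hAj := hB.size_self
  have hAi := hB.size_of_ne hij
  refine ⟨X.delete j k', Arr.insertsTo_delete (by omega),
    insertsTo_of_get (k := k) ?_ (by omega) fun x _ => ?_⟩
  · funext l
    have h₁ := hA.1 l
    have h₂ := hB.1 l
    simp only [Arr.delete, Pi.add_apply, Pi.sub_apply, Pi.single_apply]
    split_ifs at h₁ h₂ ⊢ <;> subst_vars <;> omega
  · rw [Arr.get_delete (by omega), hBA, hAX]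
    simp only [Function.comp_apply, insIdx_comm hij]

theorem DeletesTo.exists_deletesTo_deletesTo_of_insIdx_comp {i j : Fin d} {k k' p p' : ℕ}
    {X A B : Arr q d} (hA : DeletesTo i X A) (hB : DeletesTo j X B)
    (hAX : A.get = X.get ∘ insIdx i k) (hBX : B.get = X.get ∘ insIdx j k')
    (hp : p < A.size j) (hp' : p' < B.size i)
    (hcomp : insIdx i k ∘ insIdx j p = insIdx j k' ∘ insIdx i p') :
    ∃ C, DeletesTo j A C ∧ DeletesTo i B C := by
  have hsize : B.size = (A.delete j p).size + Pi.single i 1 := by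
    funext l
    have h1 := hA.1 l
    have h2 := hB.1 l
    simp only [Arr.delete, Pi.add_apply, Pi.sub_apply, Pi.single_apply]
    split_ifs at h1 h2 ⊢ <;> subst_vars <;> omega
  refine ⟨A.delete j p, Arr.insertsTo_delete hp, insertsTo_of_get (k := p') hsize ?_ fun x _ => ?_⟩
  · have := congrFun hsize i
    simp only [Pi.add_apply, Pi.single_eq_same] at this
    omega
  · rw [Arr.get_delete hp, hAX, hBX]
    exact congrFun (congrArg (X.get ∘ ·) hcomp) x

theorem DeletesTo.exists_deletesTo_deletesTo {i j : Fin d} {X A B : Arr q d}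
    (hA : DeletesTo i X A) (hB : DeletesTo j X B) (hX : i = j → 2 ≤ X.size i) :
    ∃ C, DeletesTo j A C ∧ DeletesTo i B C := by
  obtain ⟨k, hk, hAX⟩ := hA.exists_get_eq
  obtain ⟨k', hk', hBX⟩ := hB.exists_get_eq
  have hAi := hA.size_self
  have hBj := hB.size_self
  by_cases hij : i = j
  · subst hij
    rcases lt_trichotomy k k' with hlt | rfl | hgt
    · refine hA.exists_deletesTo_deletesTo_of_insIdx_comp hB hAX hBX (p := k' - 1) (p' := k)
        (by omega) (by omega) (funext fun x => ?_)
      simpa [Nat.sub_add_cancel (by omega : 1 ≤ k')] using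
        insIdx_insIdx_of_le i (by omega : k ≤ k' - 1) x
    · obtain rfl : A = B := Arr.ext_of_get
        (add_right_cancel (hA.size_eq.symm.trans hB.size_eq))
        (hAX.trans hBX.symm)
      exact ⟨A.delete i 0, Arr.insertsTo_delete (by omega), Arr.insertsTo_delete (by omega)⟩
    · obtain ⟨C, hCB, hCA⟩ := hB.exists_deletesTo_deletesTo_of_insIdx_comp hA hBX hAX
        (p := k - 1) (p' := k') (by omega) (by omega) (funext fun x => by
          simpa [Nat.sub_add_cancel (by omega : 1 ≤ k)] using
            (insIdx_insIdx_of_le i (by omega : k' ≤ k - 1) x))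
      exact ⟨C, hCA, hCB⟩
  · exact hA.exists_deletesTo_deletesTo_of_insIdx_comp hB hAX hBX (p := k') (p' := k)
      (by have := hA.size_of_ne (Ne.symm hij); omega) (by have := hB.size_of_ne hij; omega)
      (funext fun x => insIdx_comm hij k k' x)

theorem InsertsTo.exists_insertsTo_insertsTo_of_delIdx_comm {i j : Fin d} {k k' p : ℕ}
    {C A B : Arr q d} (hA : InsertsTo i C A) (hB : InsertsTo j C B)
    (hAC : C.get = A.get ∘ insIdx i k) (hBC : C.get = B.get ∘ insIdx j k')
    (hk : k ≤ B.size i) (hp : p ≤ A.size j) (hpk : ∀ y, insIdx i k y j = p ↔ y j = k')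
    (hcomm : ∀ y, y j ≠ k' → delIdx j p (insIdx i k y) = insIdx i k (delIdx j k' y)) :
    ∃ X, InsertsTo j A X ∧ InsertsTo i B X := by
  -- `A` with a new hyperplane at position `p` along axis `j`, filled from `B`
  let X : Arr q d := ⟨A.size + Pi.single j 1,
    fun x _ => if x j = p then B.get (delIdx i k x) else A.get (delIdx j p x)⟩
  have hXB : X.size = B.size + Pi.single i 1 := by
    change A.size + _ = _
    rw [hA.size_eq, hB.size_eq, add_right_comm]
  refine ⟨X, insertsTo_of_get rfl hp fun y hy => ?_, insertsTo_of_get hXB hk fun y hy => ?_⟩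
  · rw [X.get_of_mem ((insIdx_lt_add_single_iff hp).2 hy)]
    simp only [X, if_neg (insIdx_self_ne j p y), delIdx_insIdx]
  · rw [X.get_of_mem (hXB ▸ (insIdx_lt_add_single_iff hk).2 hy)]
    by_cases hyk : y j = k'
    · simp only [X, if_pos ((hpk y).2 hyk), delIdx_insIdx]
    · simp only [X, if_neg (mt (hpk y).1 hyk), hcomm y hyk]
      rw [← Function.comp_apply (f := A.get), ← hAC, hBC, Function.comp_apply, insIdx_delIdx hyk]

theorem InsertsTo.exists_insertsTo_insertsTo {i j : Fin d} {C A B : Arr q d}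
    (hA : InsertsTo i C A) (hB : InsertsTo j C B) : ∃ X, InsertsTo j A X ∧ InsertsTo i B X := by
  obtain ⟨k, hk, hAC⟩ := hA.exists_get_eq
  obtain ⟨k', hk', hBC⟩ := hB.exists_get_eq
  have hAi := hA.size_self
  have hBj := hB.size_self
  by_cases hij : i = j
  · subst hij
    have hpk {k k' : ℕ} (h : k ≤ k') (y : Fin d → ℕ) : insIdx i k y i = k' + 1 ↔ y i = k' := by
      simp only [insIdx, if_true]; split_ifs <;> omega
    rcases le_total k k' with h | h
    · exact hA.exists_insertsTo_insertsTo_of_delIdx_comm hB hAC hBC (by omega) (by omega) (hpk h)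
        fun y hy => delIdx_succ_insIdx h hy
    · obtain ⟨X, hBX, hAX⟩ := hB.exists_insertsTo_insertsTo_of_delIdx_comm hA hBC hAC (by omega)
        (by omega) (hpk h) fun y hy => delIdx_succ_insIdx h hy
      exact ⟨X, hAX, hBX⟩
  · refine hA.exists_insertsTo_insertsTo_of_delIdx_comm hB hAC hBC ?_ ?_ (fun y => ?_)
      fun y _ => delIdx_insIdx_comm hij k k' y
    · have := hB.size_of_ne hij; omega
    · have := hA.size_of_ne (Ne.symm hij); omega
    · simp [insIdx, Ne.symm hij]

end SingleSteps

namespace Steps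

variable {q d : ℕ} {R : Fin d → Arr q d → Arr q d → Prop}

theorem single {i : Fin d} {A B : Arr q d} (h : R i A B) : Steps R (Pi.single i 1) A B := by
  simpa using Steps.step i h (Steps.refl B)

theorem trans {s s' : Fin d → ℕ} {A B C : Arr q d} (h₁ : Steps R s A B) (h₂ : Steps R s' B C) :
    Steps R (s + s') A C := by
  induction h₁ with
  | refl => simpa using h₂
  | step i hAB _ ih => simpa only [add_right_comm] using Steps.step i hAB (ih h₂)

theorem flip {s : Fin d → ℕ} {A B : Arr q d} (h : Steps R s A B) :
    Steps (fun i A B => R i B A) s B A := by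
  induction h with
  | refl A => exact Steps.refl A
  | step i hAB _ ih => exact ih.trans (single hAB)

theorem eq_of_zero {A B : Arr q d} (h : Steps R 0 A B) : A = B := by
  generalize hs : (0 : Fin d → ℕ) = s at h
  cases h with
  | refl => rfl
  | step i _ _ => simpa using congrFun hs i

theorem exists_steps_rel
    (hswap : ∀ {i j X A B}, R i X A → R j A B → ∃ A', R j X A' ∧ R i A' B)
    {i : Fin d} {a : Fin d → ℕ} {X X' W' : Arr q d} (h₁ : R i X X') (h₂ : Steps R a X' W') :
    ∃ W, Steps R a X W ∧ R i W W' := by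
  induction h₂ generalizing X with
  | refl => exact ⟨X, Steps.refl X, h₁⟩
  | step j hXB _ ih =>
    obtain ⟨A', hXA', hA'B⟩ := hswap h₁ hXB
    obtain ⟨W, hA'W, hWC⟩ := ih hA'B
    exact ⟨W, Steps.step j hXA' hA'W, hWC⟩

theorem exists_of_add
    (hswap : ∀ {i j X A B}, R i X A → R j A B → ∃ A', R j X A' ∧ R i A' B)
    {a b : Fin d → ℕ} {X Y : Arr q d} (h : Steps R (a + b) X Y) :
    ∃ W, Steps R a X W ∧ Steps R b W Y := by
  generalize hs : a + b = s at h
  induction h generalizing a b with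
  | refl A =>
    obtain ⟨rfl, rfl⟩ := add_eq_zero.1 hs
    exact ⟨A, Steps.refl A, Steps.refl A⟩
  | @step t X X' Y i hXX' _ ih =>
    by_cases hai : 1 ≤ a i
    · obtain ⟨W, hX'W, hWY⟩ := ih (eq_sub_single_add hs.symm hai).symm
      refine ⟨W, ?_, hWY⟩
      simpa only [sub_single_add_single hai] using Steps.step i hXX' hX'W
    · have hbi : 1 ≤ b i := by
        have := congrFun hs i
        simp only [Pi.add_apply, Pi.single_eq_same] at this
        omega
      have hs' : a + (b - Pi.single i 1) = t := by
        rw [eq_sub_single_add (hs.symm.trans (add_comm a b)) hbi, add_comm]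
      obtain ⟨W', hX'W', hW'Y⟩ := ih hs'
      obtain ⟨W, hXW, hWW'⟩ := exists_steps_rel hswap hXX' hX'W'
      refine ⟨W, hXW, ?_⟩
      simpa only [sub_single_add_single hbi] using Steps.step i hWW' hW'Y

theorem diamond (hR : ∀ {i j A B C}, R i A B → R j A C → ∃ D, R j B D ∧ R i C D)
    {a b : Fin d → ℕ} {A B C : Arr q d} (hB : Steps R a A B) (hC : Steps R b A C) :
    ∃ D, Steps R b B D ∧ Steps R a C D := by
  have strip : ∀ {i b A B C}, R i A B → Steps R b A C → ∃ D, Steps R b B D ∧ R i C D := by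
    intro i b A B C hAB hAC
    induction hAC generalizing B with
    | refl => exact ⟨B, Steps.refl B, hAB⟩
    | step j hAA' _ ih =>
      obtain ⟨D₁, hBD₁, hA'D₁⟩ := hR hAB hAA'
      obtain ⟨D, hD₁D, hCD⟩ := ih hA'D₁
      exact ⟨D, Steps.step j hBD₁ hD₁D, hCD⟩
  induction hB generalizing C with
  | refl => exact ⟨C, hC, Steps.refl C⟩
  | step i hAA' _ ih =>
    obtain ⟨D₁, hA'D₁, hCD₁⟩ := strip hAA' hC
    obtain ⟨D, hBD, hD₁D⟩ := ih hA'D₁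
    exact ⟨D, hBD, Steps.step i hCD₁ hD₁D⟩

end Steps

section Deletions

variable {q d : ℕ}

theorem Steps.size_eq {a : Fin d → ℕ} {X Y : Arr q d} (h : Steps DeletesTo a X Y) :
    X.size = Y.size + a := by
  induction h with
  | refl => exact (add_zero _).symm
  | step i hXB _ ih => rw [hXB.size_eq, ih, add_assoc]

variable [NeZero q]

theorem DeletesTo.exists_steps_deletesTo {i : Fin d} {b : Fin d → ℕ} {X A B : Arr q d}
    (hA : DeletesTo i X A) (hB : Steps DeletesTo b X B) (hX : b + Pi.single i 1 ≤ X.size) :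
    ∃ D, Steps DeletesTo b A D ∧ DeletesTo i B D := by
  induction hB generalizing A with
  | refl => exact ⟨A, Steps.refl A, hA⟩
  | @step t X X' B j hXX' _ ih =>
    obtain ⟨D₁, hAD₁, hX'D₁⟩ := hA.exists_deletesTo_deletesTo hXX' fun hij => by
      subst hij; have := hX i; simp only [Pi.add_apply, Pi.single_eq_same] at this; omega
    obtain ⟨D, hD₁D, hBD⟩ := ih hX'D₁ fun l => by
      have h₁ := hX l
      have h₂ := congrFun hXX'.size_eq l
      simp only [Pi.add_apply] at h₁ h₂ ⊢
      omega
    exact ⟨D, Steps.step j hAD₁ hD₁D, hBD⟩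

theorem Steps.exists_common_deletion {a b : Fin d → ℕ} {X A B : Arr q d}
    (hA : Steps DeletesTo a X A) (hB : Steps DeletesTo b X B) (hX : a + b ≤ X.size) :
    ∃ C, Steps DeletesTo b A C ∧ Steps DeletesTo a B C := by
  induction hA generalizing B with
  | refl => exact ⟨B, hB, Steps.refl B⟩
  | @step t X X' A i hXX' _ ih =>
    obtain ⟨D₁, hX'D₁, hBD₁⟩ := hXX'.exists_steps_deletesTo hB fun l => by
      have := hX l
      simp only [Pi.add_apply] at this ⊢
      omega
    obtain ⟨C, hAC, hD₁C⟩ := ih hX'D₁ fun l => by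
      have h₁ := hX l
      have h₂ := congrFun hXX'.size_eq l
      simp only [Pi.add_apply] at h₁ h₂ ⊢
      omega
    exact ⟨C, hAC, Steps.step i hBD₁ hD₁C⟩

end Deletions

section Chains

variable {q d : ℕ} [NeZero q]

theorem exists_chain_of_delBall_inter_nonempty {n : ℕ} {X₁ : Arr q d} (hX₁ : X₁ ∈ cube q d n)
    (t : ℕ) (Xlast : Arr q d)
    (h : (delBall (fun _ => t) X₁ ∩ delBall (fun _ => t) Xlast).Nonempty) :
    ∃ Z : ℕ → Arr q d, Z 1 = X₁ ∧ Z (t + 1) = Xlast ∧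
      (∀ i, 2 ≤ i → i ≤ t → Z i ∈ cube q d n) ∧
      (∀ i, 1 ≤ i → i ≤ t →
        (delBall (fun _ => (1 : ℕ)) (Z i) ∩ delBall (fun _ => (1 : ℕ)) (Z (i + 1))).Nonempty) := by
  induction t generalizing Xlast with
  | zero =>
    obtain ⟨Y, hX₁Y, hXlastY⟩ := h
    refine ⟨fun _ => X₁, rfl, ?_, fun i hi hi' => by omega, fun i hi hi' => by omega⟩
    exact (Steps.eq_of_zero hX₁Y).trans (Steps.eq_of_zero hXlastY).symm
  | succ t ih =>
    obtain ⟨Y, hX₁Y, hXlastY⟩ := h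
    obtain ⟨W, hX₁W, hWY⟩ :=
      Steps.exists_of_add (a := fun _ => t) (b := fun _ => 1) DeletesTo.exists_swap hX₁Y
    have hcomm : (fun _ : Fin d => t + 1) = (fun _ => 1) + fun _ => t :=
      funext fun _ => Nat.add_comm t 1
    obtain ⟨M, hXlastM, hMY⟩ :=
      Steps.exists_of_add DeletesTo.exists_swap (hcomm ▸ hXlastY : Steps DeletesTo _ Xlast Y)
    obtain ⟨X', hWX', hMX'⟩ :=
      Steps.diamond InsertsTo.exists_insertsTo_insertsTo hWY.flip hMY.flip
    have hX' : X' ∈ cube q d n :=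
      (Steps.size_eq hWX'.flip).trans ((Steps.size_eq hX₁W).symm.trans hX₁)
    obtain ⟨Z, hZ₁, hZX', hZcube, hZlink⟩ := ih X' ⟨W, hX₁W, hWX'.flip⟩
    refine ⟨Function.update Z (t + 1 + 1) Xlast, ?_, Function.update_self .., ?_, ?_⟩
    · rw [Function.update_of_ne (by omega), hZ₁]
    · intro i hi hit
      rw [Function.update_of_ne (by omega)]
      rcases hit.lt_or_eq with hit | rfl
      · exact hZcube i hi (by omega)
      · rwa [hZX']
    · intro i hi hit
      rw [Function.update_of_ne (by omega)]
      rcases hit.lt_or_eq with hit | rfl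
      · rw [Function.update_of_ne (by omega)]
        exact hZlink i hi (by omega)
      · rw [Function.update_self, hZX']
        exact ⟨M, hMX'.flip, hXlastM⟩

theorem delBall_inter_nonempty_of_chain {n t : ℕ} (htn : t ≤ n) (Z : ℕ → Arr q d)
    (hcube : ∀ i, 1 ≤ i → i ≤ t → Z i ∈ cube q d n)
    (hlink : ∀ i, 1 ≤ i → i ≤ t →
      (delBall (fun _ => (1 : ℕ)) (Z i) ∩ delBall (fun _ => (1 : ℕ)) (Z (i + 1))).Nonempty) :
    ∀ j ≤ t, (delBall (fun _ => j) (Z 1) ∩ delBall (fun _ => j) (Z (j + 1))).Nonempty := by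
  intro j
  induction j with
  | zero => exact fun _ => ⟨Z 1, Steps.refl _, Steps.refl _⟩
  | succ j ih =>
    intro hj
    obtain ⟨V, hZV, hZ'V⟩ := ih (by omega)
    obtain ⟨W, hZ'W, hZ''W⟩ := hlink (j + 1) (by omega) hj
    obtain ⟨C, hVC, hWC⟩ := Steps.exists_common_deletion hZ'V hZ'W fun l => by
      have := congrFun (hcube (j + 1) (by omega) hj) l
      simp only [Pi.add_apply] at this ⊢
      omega
    refine ⟨C, hZV.trans hVC, ?_⟩
    have hcomm : (fun _ : Fin d => (1 : ℕ)) + (fun _ => j) = fun _ => j + 1 :=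
      funext fun _ => Nat.add_comm 1 j
    exact hcomm ▸ hZ''W.trans hWC

end Chains

theorem statement15_general (q d n t : ℕ) (hq : 2 ≤ q)
    (htn : t ≤ n)
    (X₁ Xlast : Arr q d) (hX₁ : X₁ ∈ cube q d n) :
    (delBall (fun _ => t) X₁ ∩ delBall (fun _ => t) Xlast).Nonempty ↔
    ∃ Z : ℕ → Arr q d, Z 1 = X₁ ∧ Z (t + 1) = Xlast ∧
      (∀ i, 2 ≤ i → i ≤ t → Z i ∈ cube q d n) ∧
      (∀ i, 1 ≤ i → i ≤ t →
        (delBall (fun _ => (1 : ℕ)) (Z i) ∩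
          delBall (fun _ => (1 : ℕ)) (Z (i + 1))).Nonempty) := by
  have : NeZero q := ⟨by omega⟩
  refine ⟨exists_chain_of_delBall_inter_nonempty hX₁ t Xlast, ?_⟩
  rintro ⟨Z, rfl, rfl, hcube, hlink⟩
  refine delBall_inter_nonempty_of_chain htn Z (fun i hi hit => ?_) hlink t le_rfl
  rcases hi.eq_or_lt with rfl | hi
  · exact hX₁
  · exact hcube i hi hit

/-- **Appendix Claim 4.** For `1 ≤ t ≤ n` and arrays `X₁, X_{t+1} ∈ Σ_q^{n^{⊗d}}`,
`D_{t𝟏}(X₁) ∩ D_{t𝟏}(X_{t+1}) ≠ ∅` iff there exist `t − 1` arrays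
`X₂, …, X_t ∈ Σ_q^{n^{⊗d}}` with `D_𝟏(X_i) ∩ D_𝟏(X_{i+1}) ≠ ∅` for all `1 ≤ i ≤ t`. -/
theorem statement15 (q d n t : ℕ) (hq : 2 ≤ q) (hd : 1 ≤ d)
    (ht : 1 ≤ t) (htn : t ≤ n)
    (X₁ Xlast : Arr q d) (hX₁ : X₁ ∈ cube q d n) (hXlast : Xlast ∈ cube q d n) :
    (delBall (fun _ => t) X₁ ∩ delBall (fun _ => t) Xlast).Nonempty ↔
    ∃ Z : ℕ → Arr q d, Z 1 = X₁ ∧ Z (t + 1) = Xlast ∧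
      (∀ i, 2 ≤ i → i ≤ t → Z i ∈ cube q d n) ∧
      (∀ i, 1 ≤ i → i ≤ t →
        (delBall (fun _ => (1 : ℕ)) (Z i) ∩
          delBall (fun _ => (1 : ℕ)) (Z (i + 1))).Nonempty) :=
  statement15_general q d n t hq htn X₁ Xlast hX₁
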